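/- Suppose z_n ≠ z_{n+1}, where z_m denotes the maximal m-recurrent tail of the infinite word x. Then there exists a bi-special factor w of z_n of length n−1, a letter y such that wy is the prefix of length n of z_{n+1}, and a letter x' (the last letter of the (n+1)-th non-recurrent prefix a_{n+1}) such that x'wy is a factor of z_n but x'wy is not a factor of z_{n+1}. In particular, wy is a left-special factor. -/
import Mathlib


open Filter

variable {A : Type*}

/-- The factor of the infinite word `x` of length `n` starting at position `j` (0-indexed). -/
def subwordAt (x : ℕ → A) (j n : ℕ) : List A := (List.range n).map fun i => x (j + i)

/-- `w` is a factor (subword) of the infinite word `x`. -/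
def IsFactor (w : List A) (x : ℕ → A) : Prop := ∃ j, subwordAt x j w.length = w

/-- The subword complexity `p(n, x)`: the number of distinct length-`n` factors of `x`. -/
noncomputable def complexity (x : ℕ → A) (n : ℕ) : ℕ :=
  Set.ncard {w : List A | w.length = n ∧ IsFactor w x}

/-- `x` is ultimately periodic. -/
def UltimatelyPeriodic (x : ℕ → A) : Prop := ∃ N T, 0 < T ∧ ∀ i ≥ N, x (i + T) = x i

/-- `w` is a left-special factor of `x`. -/
def LeftSpecial (w : List A) (x : ℕ → A) : Prop :=
  ∃ a b : A, a ≠ b ∧ IsFactor (a :: w) x ∧ IsFactor (b :: w) x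

/-- `w` is a right-special factor of `x`. -/
def RightSpecial (w : List A) (x : ℕ → A) : Prop :=
  ∃ a b : A, a ≠ b ∧ IsFactor (w ++ [a]) x ∧ IsFactor (w ++ [b]) x

/-- `w` occurs infinitely many times in `x`. -/
def OccursInfinitely (w : List A) (x : ℕ → A) : Prop :=
  {j : ℕ | subwordAt x j w.length = w}.Infinite

/-- `x` is `n`-recurrent: every length-`n` factor occurs infinitely often. -/
def NRecurrent (n : ℕ) (x : ℕ → A) : Prop :=
  ∀ j : ℕ, {i : ℕ | subwordAt x i n = subwordAt x j n}.Infinite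

/-- The shift of `x` by `s` places. -/
def shiftWord (x : ℕ → A) (s : ℕ) : ℕ → A := fun i => x (s + i)

/-- `s_m`: the length of the `m`-th non-recurrent prefix of `x`. -/
noncomputable def srec (x : ℕ → A) (m : ℕ) : ℕ := sInf {s : ℕ | NRecurrent m (shiftWord x s)}

/-- `z_m`: the maximal `m`-recurrent tail of `x`, so that `x = a_m z_m`. -/
noncomputable def ztail (x : ℕ → A) (m : ℕ) : ℕ → A := shiftWord x (srec x m)

/-- The repetition function `r(n, x)`: the least `m ≥ 1` such that
`x_{m+1} … x_{m+n} = x_{i+1} … x_{i+n}` for some `0 ≤ i < m`. -/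
noncomputable def repFn (x : ℕ → A) (n : ℕ) : ℕ :=
  sInf {m : ℕ | 0 < m ∧ ∃ i < m, subwordAt x m n = subwordAt x i n}

/-- A right-special factor `w` is essential if it is a suffix of right-special
factors of every length `m ≥ |w|`. -/
def EssentialRightSpecial (w : List A) (x : ℕ → A) : Prop :=
  RightSpecial w x ∧
    ∀ m, w.length ≤ m → ∃ W : List A, W.length = m ∧ RightSpecial W x ∧ W.drop (m - w.length) = w

/-- `C` is (the word read along) a cycle at `w` in the Rauzy graph `𝒢_n(y)`:
it has length `> n`, prefix `w`, suffix `w`, and is a factor of `y`. -/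
def IsCycleAt (y : ℕ → A) (n : ℕ) (w C : List A) : Prop :=
  n < C.length ∧ C.take n = w ∧ C.drop (C.length - n) = w ∧ IsFactor C y

/-- The Rauzy graph `𝒢_n(y)` is of `∞`-shape with bi-special vertex `w`
and the two (simple) cycles `U` and `V`. -/
def InftyShape (y : ℕ → A) (n : ℕ) (w U V : List A) : Prop :=
  w.length = n ∧ LeftSpecial w y ∧ RightSpecial w y ∧
  (∀ v : List A, v.length = n → IsFactor v y → (LeftSpecial v y ∨ RightSpecial v y) → v = w) ∧
  IsCycleAt y n w U ∧ IsCycleAt y n w V ∧ U ≠ V ∧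
  (∀ j, 0 < j → j < U.length - n → (U.drop j).take n ≠ w) ∧
  (∀ j, 0 < j → j < V.length - n → (V.drop j).take n ≠ w) ∧
  (∀ v : List A, v.length = n → IsFactor v y →
    (∃ j ≤ U.length - n, (U.drop j).take n = v) ∨ (∃ j ≤ V.length - n, (V.drop j).take n = v))

/-- The word read along the concatenated path `U V^b U`, where `U`, `V` are
cycles at a vertex of length `n` (gluing overlaps of length `n`). -/
def cyclePow (n : ℕ) (U V : List A) (b : ℕ) : List A :=
  U ++ (List.replicate b (V.drop n)).flatten ++ U.drop n

/-- The irrationality exponent of a real number, valued in `ℝ≥0∞`. -/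
noncomputable def irrationalityExponent (ξ : ℝ) : ENNReal :=
  ⨆ (μ : ℝ) (_ : {q : ℕ | 0 < q ∧ ∃ p : ℤ, |ξ - p / q| < 1 / (q : ℝ) ^ μ}.Infinite),
    ENNReal.ofReal μ
lemma aux_subword_len (x : ℕ → A) (j n : ℕ) : (subwordAt x j n).length = n := by
  simp [subwordAt]

lemma aux_shift (x : ℕ → A) (s j n : ℕ) :
    subwordAt (shiftWord x s) j n = subwordAt x (s + j) n := by
  simp [subwordAt, shiftWord, add_assoc]

lemma aux_take (x : ℕ → A) (j : ℕ) {m n : ℕ} (h : n ≤ m) :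
    (subwordAt x j m).take n = subwordAt x j n := by
  simp [subwordAt, ← List.map_take, List.take_range, Nat.min_eq_left h]

lemma aux_cons (x : ℕ → A) (j m : ℕ) :
    subwordAt x j (m + 1) = x j :: subwordAt x (j + 1) m := by
  unfold subwordAt
  rw [List.range_succ_eq_map, List.map_cons, List.map_map, add_zero]
  refine congrArg (x j :: ·) (List.map_congr_left ?_)
  intro i _
  simp only [Function.comp_apply]
  congr 1
  omega

lemma aux_snoc (x : ℕ → A) (j m : ℕ) :
    subwordAt x j (m + 1) = subwordAt x j m ++ [x (j + m)] := by
  unfold subwordAt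
  rw [List.range_succ, List.map_append, List.map_cons]
  rfl

lemma aux_inf_pre {S : Set ℕ} (hS : S.Infinite) (t : ℕ) : {i : ℕ | t + i ∈ S}.Infinite := by
  by_contra h
  rw [Set.not_infinite] at h
  have hsub : S ⊆ Set.Iio t ∪ (fun i => t + i) '' {i | t + i ∈ S} := by
    intro k hk
    by_cases hkt : k < t
    · exact Or.inl hkt
    · right
      refine ⟨k - t, ?_, by show t + (k - t) = k; omega⟩
      have hkeq : t + (k - t) = k := by omega
      simpa [hkeq] using hk
  exact hS (((Set.finite_Iio t).union (h.image _)).subset hsub)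

lemma aux_exists_gt {S : Set ℕ} (hS : S.Infinite) (a : ℕ) : ∃ b ∈ S, a < b := by
  obtain ⟨b, hb, hb'⟩ := hS.exists_notMem_finite (Set.finite_Iic a)
  exact ⟨b, hb, by simpa using hb'⟩

lemma aux_nrec_mono {x : ℕ → A} {m n : ℕ} (h : m ≤ n) (hx : NRecurrent n x) :
    NRecurrent m x := by
  intro j
  refine (hx j).mono ?_
  intro i hi
  simp only [Set.mem_setOf_eq] at hi ⊢
  calc subwordAt x i m = (subwordAt x i n).take m := (aux_take x i h).symm
    _ = (subwordAt x j n).take m := by rw [hi]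
    _ = subwordAt x j m := aux_take x j h

lemma aux_nrec_shift {x : ℕ → A} {n : ℕ} (hx : NRecurrent n x) (t : ℕ) :
    NRecurrent n (shiftWord x t) := by
  intro j
  have h2 : {i : ℕ | subwordAt (shiftWord x t) i n = subwordAt (shiftWord x t) j n}
      = {i : ℕ | t + i ∈ {k : ℕ | subwordAt x k n = subwordAt x (t + j) n}} := by
    ext i; simp [aux_shift]
  rw [h2]
  exact aux_inf_pre (hx (t + j)) t

lemma aux_nrec_cons {y z : ℕ → A} {m : ℕ} (h1 : ∀ i, y (1 + i) = z i)
    (hz : NRecurrent m z) (h0 : ∃ k, subwordAt z k m = subwordAt y 0 m) :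
    NRecurrent m y := by
  have hsub : ∀ k, subwordAt y (1 + k) m = subwordAt z k m := by
    intro k
    have hfe : (fun i => y (1 + k + i)) = fun i => z (k + i) := by
      funext i
      rw [show 1 + k + i = 1 + (k + i) by omega]
      exact h1 _
    simp [subwordAt, hfe]
  intro j
  obtain ⟨k0, hk0⟩ : ∃ k0, subwordAt z k0 m = subwordAt y j m := by
    cases j with
    | zero => exact h0
    | succ j' => exact ⟨j', by rw [← hsub]; congr 1; omega⟩
  have himg : ((fun k => 1 + k) '' {k | subwordAt z k m = subwordAt z k0 m})
      ⊆ {i | subwordAt y i m = subwordAt y j m} := by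
    rintro i ⟨k, hk, rfl⟩
    simp only [Set.mem_setOf_eq] at hk ⊢
    rw [hsub, hk, hk0]
  exact (((hz k0).image (fun a _ b _ hab => by omega))).mono himg

lemma aux_factor_prefix {u v : List A} {x : ℕ → A} (h : IsFactor (u ++ v) x) :
    IsFactor u x := by
  obtain ⟨j, hj⟩ := h
  refine ⟨j, ?_⟩
  have ht := aux_take x j (show u.length ≤ (u ++ v).length by simp)
  rw [hj] at ht
  rw [← ht, List.take_left]

lemma aux_factor_tail {a : A} {u : List A} {x : ℕ → A} (h : IsFactor (a :: u) x) :
    IsFactor u x := by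
  obtain ⟨j, hj⟩ := h
  refine ⟨j + 1, ?_⟩
  rw [show (a :: u).length = u.length + 1 from rfl, aux_cons] at hj
  simpa using congrArg List.tail hj

lemma aux_factor_of_shift_le {x : ℕ → A} {t t' : ℕ} (h : t' ≤ t) {w : List A}
    (hf : IsFactor w (shiftWord x t)) : IsFactor w (shiftWord x t') := by
  obtain ⟨j, hj⟩ := hf
  refine ⟨t - t' + j, ?_⟩
  rw [aux_shift] at hj ⊢
  rw [show t' + (t - t' + j) = t + j by omega]
  exact hj

theorem bispecial_of_ztail_ne {A : Type*} [Fintype A] (x : ℕ → A) (n : ℕ) (hn : 1 ≤ n)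
    (hex : ∃ s : ℕ, NRecurrent n (shiftWord x s))
    (hex' : ∃ s : ℕ, NRecurrent (n + 1) (shiftWord x s))
    (hne : ztail x n ≠ ztail x (n + 1)) :
    ∃ (w : List A) (y x' : A),
      w.length = n - 1 ∧
      LeftSpecial w (ztail x n) ∧ RightSpecial w (ztail x n) ∧
      w ++ [y] = subwordAt (ztail x (n + 1)) 0 n ∧
      x' = x (srec x (n + 1) - 1) ∧
      IsFactor (x' :: (w ++ [y])) (ztail x n) ∧
      ¬ IsFactor (x' :: (w ++ [y])) (ztail x (n + 1)) ∧
      LeftSpecial (w ++ [y]) (ztail x n) := by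
  obtain ⟨m, rfl⟩ : ∃ m, n = m + 1 := ⟨n - 1, by omega⟩
  simp only [ztail]
  set s : ℕ := srec x (m + 1) with hs_def
  set s' : ℕ := srec x (m + 1 + 1) with hs'_def
  have hs : NRecurrent (m + 1) (shiftWord x s) := Nat.sInf_mem hex
  have hs' : NRecurrent (m + 1 + 1) (shiftWord x s') := Nat.sInf_mem hex'
  have h_le : s ≤ s' :=
    Nat.sInf_le (show NRecurrent (m + 1) (shiftWord x s') from aux_nrec_mono (by omega) hs')
  have hlt : s < s' := by
    rcases lt_or_eq_of_le h_le with h | h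
    · exact h
    · exact absurd (by simp only [ztail, ← hs_def, ← hs'_def, h]) hne
  have hmin : ¬ NRecurrent (m + 1 + 1) (shiftWord x (s' - 1)) := by
    intro h
    have h2 : srec x (m + 1 + 1) ≤ s' - 1 := Nat.sInf_le h
    rw [← hs'_def] at h2
    omega
  -- the key objects
  set w : List A := subwordAt x s' m with hw_def
  set y : A := x (s' + m) with hy_def
  set x' : A := x (s' - 1) with hx'_def
  have hwlen : w.length = m := aux_subword_len x s' m
  have hwy : subwordAt x s' (m + 1) = w ++ [y] := aux_snoc x s' m
  have hx'wy : subwordAt x (s' - 1) (m + 2) = x' :: (w ++ [y]) := by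
    rw [show m + 2 = (m + 1) + 1 from rfl, aux_cons, show s' - 1 + 1 = s' by omega, hwy]
  have hx'w : subwordAt x (s' - 1) (m + 1) = x' :: w := by
    rw [aux_cons, show s' - 1 + 1 = s' by omega, ← hw_def]
  have hlen2 : (x' :: (w ++ [y])).length = m + 2 := by simp [hwlen]
  have hlen1 : (w ++ [y]).length = m + 1 := by simp [hwlen]
  -- x'wy is not a factor of z_{n+1}
  have hnot : ¬ IsFactor (x' :: (w ++ [y])) (shiftWord x s') := by
    rintro ⟨j, hj⟩
    rw [hlen2, aux_shift] at hj
    apply hmin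
    refine aux_nrec_cons (y := shiftWord x (s' - 1)) (z := shiftWord x s') ?_ hs' ?_
    · intro i
      simp only [shiftWord]
      congr 1
      omega
    · refine ⟨j, ?_⟩
      rw [aux_shift, aux_shift, add_zero, hj, hx'wy]
  -- x'wy is a factor of z_n
  have hfac : IsFactor (x' :: (w ++ [y])) (shiftWord x s) := by
    refine ⟨s' - 1 - s, ?_⟩
    rw [hlen2, aux_shift, show s + (s' - 1 - s) = s' - 1 by omega, hx'wy]
  -- left special: find another left extension of wy
  have hz_rec : NRecurrent (m + 1) (shiftWord x s') := aux_nrec_mono (by omega) hs'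
  obtain ⟨i, hiS, hipos⟩ := aux_exists_gt (hz_rec 0) 0
  simp only [Set.mem_setOf_eq, aux_shift, add_zero] at hiS
  -- hiS : subwordAt x (s' + i) (m+1) = subwordAt x s' (m+1)
  set c : A := x (s' + (i - 1)) with hc_def
  have hc_fac : subwordAt (shiftWord x s') (i - 1) (m + 2) = c :: (w ++ [y]) := by
    rw [aux_shift, show m + 2 = (m + 1) + 1 from rfl, aux_cons,
      show s' + (i - 1) + 1 = s' + i by omega, hiS, hwy, ← hc_def]
  have hcx' : c ≠ x' := by
    intro h
    exact hnot ⟨i - 1, by rw [hlen2, hc_fac, h]⟩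
  have hfac_c : IsFactor (c :: (w ++ [y])) (shiftWord x s') :=
    ⟨i - 1, by rw [show (c :: (w ++ [y])).length = m + 2 by simp [hwlen], hc_fac]⟩
  have hfac_c_zn : IsFactor (c :: (w ++ [y])) (shiftWord x s) :=
    aux_factor_of_shift_le h_le hfac_c
  have hLSwy : LeftSpecial (w ++ [y]) (shiftWord x s) := ⟨x', c, hcx'.symm, hfac, hfac_c_zn⟩
  have hLSw : LeftSpecial w (shiftWord x s) := by
    refine ⟨x', c, hcx'.symm, ?_, ?_⟩
    · exact aux_factor_prefix (u := x' :: w) (v := [y]) (by simpa using hfac)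
    · exact aux_factor_prefix (u := c :: w) (v := [y]) (by simpa using hfac_c_zn)
  -- right special
  obtain ⟨i₂, hi₂S, hi₂ge⟩ := aux_exists_gt (hs (s' - 1 - s)) (s' - s)
  simp only [Set.mem_setOf_eq, aux_shift, show s + (s' - 1 - s) = s' - 1 by omega] at hi₂S
  rw [hx'w] at hi₂S
  -- hi₂S : subwordAt x (s + i₂) (m+1) = x' :: w
  set d : A := x (s + i₂ + (m + 1)) with hd_def
  have hd : subwordAt (shiftWord x s') (i₂ - (s' - s)) (m + 2) = x' :: (w ++ [d]) := by
    rw [aux_shift, show s' + (i₂ - (s' - s)) = s + i₂ by omega,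
      show m + 2 = (m + 1) + 1 from rfl, aux_snoc, hi₂S, ← hd_def]
    simp
  have hdy : d ≠ y := by
    intro h
    exact hnot ⟨i₂ - (s' - s), by rw [hlen2, hd, h]⟩
  have hfac_wd : IsFactor (w ++ [d]) (shiftWord x s) := by
    have h1 : IsFactor (x' :: (w ++ [d])) (shiftWord x s') :=
      ⟨i₂ - (s' - s), by rw [show (x' :: (w ++ [d])).length = m + 2 by simp [hwlen], hd]⟩
    exact aux_factor_tail (aux_factor_of_shift_le h_le h1)
  have hfac_wy : IsFactor (w ++ [y]) (shiftWord x s) := by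
    refine aux_factor_of_shift_le h_le ⟨0, ?_⟩
    rw [hlen1, aux_shift, add_zero, hwy]
  have hRSw : RightSpecial w (shiftWord x s) := ⟨y, d, hdy.symm, hfac_wy, hfac_wd⟩
  refine ⟨w, y, x', by omega, hLSw, hRSw, ?_, rfl, hfac, hnot, hLSwy⟩
  rw [aux_shift, add_zero, hwy]
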